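/- For λ a partition of at most d parts and ν a partition of at most d' parts, one has ν ≤ μ_λ (componentwise) if and only if the sorting permutation σ_{λ,ν} belongs to the set 𝒮_{2d'}. -/

import Mathlib

open scoped Classical

namespace FreeNilpotent

/-- `d' = binom(d,2)`, the rank of the derived subalgebra of `f_{2,d}`. -/
def d' (d : ℕ) : ℕ := d * (d - 1) / 2

/-- The indexing bijection `b` on pairs: `b(i,j) = d' + j − 1 + (i−1)(2d−2−i)/2`. -/
def bmap (d i j : ℕ) : ℕ := d' d + j - 1 + (i - 1) * (2 * d - 2 - i) / 2

/-- The set of pairs `(i,j)` with `1 ≤ i < j ≤ d`. -/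
def pairs (d : ℕ) : Finset (ℕ × ℕ) :=
  (Finset.Icc 1 d ×ˢ Finset.Icc 1 d).filter fun p => p.1 < p.2

/-- The corresponding tuple `v_i ∈ ℕ₀^{d+d'}` (1-based coordinates `l`):
for `i ∈ [d']`, `v_i = (0^{d+i−1}, 1^{d'−i+1})`; for `i = b(j,k)` with `j < k ≤ d`,
`v_i = (0^{j−1}, 1^{k−j}, 2^{d−k+1}, 0^{d'})`. -/
def v (d i l : ℕ) : ℕ :=
  if i ≤ d' d then (if d + i ≤ l ∧ l ≤ d + d' d then 1 else 0)
  else ∑ p ∈ (pairs d).filter (fun p => bmap d p.1 p.2 = i),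
    ((if p.1 ≤ l ∧ l ≤ d then 1 else 0) + (if p.2 ≤ l ∧ l ≤ d then 1 else 0))

/-- `σ : ℕ → ℕ` is (the one-line form of) a permutation of `[2d'] = {1, …, 2d'}`. -/
def IsPermOn (d : ℕ) (σ : ℕ → ℕ) : Prop :=
  Set.BijOn σ (Set.Icc 1 (2 * d' d)) (Set.Icc 1 (2 * d' d))

/-- Membership in the set `𝒮_{2d'}` of permutations. -/
def memS (d : ℕ) (σ : ℕ → ℕ) : Prop :=
  IsPermOn d σ ∧
  (∀ i ∈ Finset.Icc 1 (2 * d' d),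
    ((Finset.Icc 1 i).filter fun l => σ l ≤ d' d).card ≤
      ((Finset.Icc 1 i).filter fun l => d' d < σ l).card) ∧
  (∀ i j, 1 ≤ i → i < j → j ≤ 2 * d' d → σ i ≤ d' d → σ j ≤ d' d → σ j < σ i →
    ∀ k, i ≤ k → k < j → σ (k + 1) < σ k)

/-- The linear form `∑_j w^σ_{i,j} r_j + ∑_j w^σ_{i,d+j} s_j` with
`w^σ_{i,·} = v_{σ(i)} − v_{σ(i+1)}`. -/
def wform (d : ℕ) (σ : ℕ → ℕ) (i : ℕ) (r s : ℕ → ℕ) : ℤ :=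
  (∑ j ∈ Finset.Icc 1 d, ((v d (σ i) j : ℤ) - (v d (σ (i + 1)) j : ℤ)) * (r j : ℤ)) +
    ∑ j ∈ Finset.Icc 1 (d' d),
      ((v d (σ i) (d + j) : ℤ) - (v d (σ (i + 1)) (d + j) : ℤ)) * (s j : ℤ)

/-- Membership of a tuple `(r,s) ∈ ℕ₀^{d+d'}` (encoded as functions with
`r` supported on `[d]` and `s` on `[d']`) in the set `G_{I,σ}`. -/
def memG (d : ℕ) (I : Finset ℕ) (σ : ℕ → ℕ) (r s : ℕ → ℕ) : Prop :=
  (∀ i ∈ I, 0 < r i) ∧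
  (∀ i, 1 ≤ i → i ≤ d - 1 → i ∉ I → r i = 0) ∧
  (∀ i, 1 ≤ i → i ≤ 2 * d' d - 1 → σ i < σ (i + 1) → 0 < wform d σ i r s) ∧
  (∀ i, 1 ≤ i → i ≤ 2 * d' d - 1 → σ (i + 1) < σ i → 0 ≤ wform d σ i r s) ∧
  (∀ j, d < j → r j = 0) ∧ (∀ j, d' d < j → s j = 0)

/-- Membership of `(I,σ)` in the set `𝒲_d`: `I ⊆ [d−1]`, `σ ∈ 𝒮_{2d'}`, and the
associated system has nonzero solutions (equivalently, `G_{I,σ}` is nonempty). -/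
def memW (d : ℕ) (I : Finset ℕ) (σ : ℕ → ℕ) : Prop :=
  I ⊆ Finset.Icc 1 (d - 1) ∧ memS d σ ∧ ∃ r s, memG d I σ r s

/-- `j ∈ J_σ`, i.e. `σ^{-1}(j) < σ^{-1}(j+1)`. -/
def Jmem (d : ℕ) (σ : ℕ → ℕ) (j : ℕ) : Prop :=
  Function.invFunOn σ (Set.Icc 1 (2 * d' d)) j <
    Function.invFunOn σ (Set.Icc 1 (2 * d' d)) (j + 1)

/-- `f` encodes a partition with at most `n` parts, written `f 1 ≥ f 2 ≥ … ≥ f n`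
(1-based) with `f i = 0` for `i > n`. -/
def IsPart (n : ℕ) (f : ℕ → ℕ) : Prop :=
  (∀ i j, 1 ≤ i → i ≤ j → f j ≤ f i) ∧ ∀ i, n < i → f i = 0

/-- The multiset `{λ_i + λ_j : 1 ≤ i < j ≤ d}` of pairwise sums of parts of `λ`. -/
def Mpair (d : ℕ) (lam : ℕ → ℕ) : Multiset ℕ :=
  (pairs d).val.map fun p => lam p.1 + lam p.2

/-- The value attached to an index `a ∈ [2d']`: `ν_a` for `a ∈ [d']` and
`λ_j + λ_k` for `a = b(j,k) ∈ d' + [d']`. -/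
def Tval (d : ℕ) (lam nu : ℕ → ℕ) (a : ℕ) : ℕ :=
  if a ≤ d' d then nu a
  else ∑ p ∈ (pairs d).filter (fun p => bmap d p.1 p.2 = a), (lam p.1 + lam p.2)

/-- `σ` is the sorting permutation `σ_{λ,ν}`: it lists the indices of the multiset
`{λ_i+λ_j}_{i<j} ∪ {ν_k}` in weakly decreasing order of values, breaking ties by
larger `b`-index first. -/
def IsSorting (d : ℕ) (lam nu : ℕ → ℕ) (σ : ℕ → ℕ) : Prop :=
  IsPermOn d σ ∧ ∀ i j, 1 ≤ i → i < j → j ≤ 2 * d' d →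
    Tval d lam nu (σ j) < Tval d lam nu (σ i) ∨
      (Tval d lam nu (σ i) = Tval d lam nu (σ j) ∧ σ j < σ i)

/-- the offset part of bmap -/
def off (d i : ℕ) : ℕ := (i - 1) * (2 * d - 2 - i) / 2

lemma two_dvd_off_num (d i : ℕ) : 2 ∣ (i - 1) * (2 * d - 2 - i) := by
  rcases Nat.even_or_odd i with h | h
  · rcases h with ⟨k, hk⟩
    rcases le_or_gt i (2*d-2) with h2 | h2
    · refine Dvd.dvd.mul_left ?_ _
      obtain ⟨m, hm⟩ := Nat.exists_eq_add_of_le h2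
      omega
    · have : 2*d-2-i = 0 := by omega
      simp [this]
  · rcases h with ⟨k, hk⟩
    exact Dvd.dvd.mul_right (by omega) _

lemma off_mul_two (d i : ℕ) : off d i * 2 = (i - 1) * (2 * d - 2 - i) := by
  rw [off, Nat.div_mul_cancel (two_dvd_off_num d i)]

lemma off_succ (d i : ℕ) (h1 : 1 ≤ i) (h2 : i + 1 ≤ d) :
    off d (i+1) = off d i + (d - 1 - i) := by
  have e1 := off_mul_two d (i+1)
  have e2 := off_mul_two d i
  obtain ⟨a, ha⟩ := Nat.exists_eq_add_of_le h2
  obtain ⟨i', hi⟩ := Nat.exists_eq_add_of_le h1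
  subst ha hi
  have h3 : 2 * (1 + i' + 1 + a) - 2 - (1 + i' + 1) = 1 + i' + 2*a - 1 := by omega
  have h4 : 2 * (1 + i' + 1 + a) - 2 - (1 + i') = 1 + i' + 2*a := by omega
  rw [h3] at e1; rw [h4] at e2
  have h5 : (1 + i' + 1 - 1) * (1 + i' + 2*a - 1) = (1 + i' - 1) * (1 + i' + 2*a) + 2*a := by
    have : 1 + i' + 1 - 1 = i' + 1 := by omega
    have h6 : 1 + i' + 2*a - 1 = i' + 2*a := by omega
    have h7 : 1 + i' - 1 = i' := by omega
    rw [this, h6, h7]; ring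
  omega

lemma off_mono (d : ℕ) (a b : ℕ) (h1 : 1 ≤ a) (hab : a ≤ b) (hb : b ≤ d) :
    off d a ≤ off d b := by
  induction b with
  | zero => omega
  | succ n ih =>
    rcases Nat.lt_or_ge a (n+1) with h | h
    · have hn : 1 ≤ n := by omega
      calc off d a ≤ off d n := ih (by omega) (by omega)
        _ ≤ off d (n+1) := by rw [off_succ d n hn (by omega)]; omega
    · have : a = n + 1 := by omega
      subst this; rfl

lemma off_ge (d i i' : ℕ) (h1 : 1 ≤ i) (h2 : i < i') (h3 : i' ≤ d) :
    off d i + (d - 1 - i) ≤ off d i' := by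
  have := off_succ d i h1 (by omega)
  have := off_mono d (i+1) i' (by omega) (by omega) h3
  omega

lemma mem_pairs {d : ℕ} {p : ℕ × ℕ} :
    p ∈ pairs d ↔ 1 ≤ p.1 ∧ p.1 < p.2 ∧ p.2 ≤ d := by
  simp only [pairs, Finset.mem_filter, Finset.mem_product, Finset.mem_Icc]
  omega

lemma bmap_eq (d i j : ℕ) (hj : 1 ≤ j) : bmap d i j = d' d + (j - 1) + off d i := by
  simp only [bmap, off]; omega

lemma bmap_lt_of_lex {d : ℕ} {p q : ℕ × ℕ} (hp : p ∈ pairs d) (hq : q ∈ pairs d)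
    (h : p.1 < q.1 ∨ (p.1 = q.1 ∧ p.2 < q.2)) :
    bmap d p.1 p.2 < bmap d q.1 q.2 := by
  rw [mem_pairs] at hp hq
  rw [bmap_eq d p.1 p.2 (by omega), bmap_eq d q.1 q.2 (by omega)]
  rcases h with h | ⟨h1, h2⟩
  · have hge := off_ge d p.1 q.1 (by omega) h (by omega)
    omega
  · rw [h1]; omega

lemma bmap_injOn {d : ℕ} {p q : ℕ × ℕ} (hp : p ∈ pairs d) (hq : q ∈ pairs d)
    (h : bmap d p.1 p.2 = bmap d q.1 q.2) : p = q := by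
  by_contra hne
  have htri : (p.1 < q.1 ∨ (p.1 = q.1 ∧ p.2 < q.2)) ∨
      (q.1 < p.1 ∨ (q.1 = p.1 ∧ q.2 < p.2)) := by
    rcases Nat.lt_trichotomy p.1 q.1 with h1 | h1 | h1
    · left; left; exact h1
    · rcases Nat.lt_trichotomy p.2 q.2 with h2 | h2 | h2
      · left; right; exact ⟨h1, h2⟩
      · exact absurd (Prod.ext h1 h2) hne
      · right; right; exact ⟨h1.symm, h2⟩
    · right; left; exact h1
  rcases htri with h1 | h1
  · exact absurd h (Nat.ne_of_lt (bmap_lt_of_lex hp hq h1))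
  · exact absurd h.symm (Nat.ne_of_lt (bmap_lt_of_lex hq hp h1))

lemma d'_eq (d : ℕ) (hd : 2 ≤ d) : ∃ a, d = a + 2 ∧ d' d = a*(a+1)/2 + (a+1) := by
  obtain ⟨a, ha⟩ := Nat.exists_eq_add_of_le hd
  refine ⟨a, by omega, ?_⟩
  have h1 : d * (d - 1) = a*(a+1) + 2*(a+1) := by
    have : d - 1 = a + 1 := by omega
    rw [this, ha]; ring
  have h2 : 2 ∣ a * (a+1) := (Nat.even_mul_succ_self a).two_dvd
  rw [d', h1]
  omega

lemma bmap_top (d : ℕ) (hd : 2 ≤ d) : bmap d (d-1) d = 2 * d' d := by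
  obtain ⟨a, ha, hda⟩ := d'_eq d hd
  rw [bmap_eq d (d-1) d (by omega)]
  have hoff : off d (d-1) = a*(a+1)/2 := by
    have := off_mul_two d (d-1)
    have h1 : (d - 1 - 1) * (2*d - 2 - (d-1)) = a * (a+1) := by
      have e1 : d - 1 - 1 = a := by omega
      have e2 : 2*d - 2 - (d-1) = a + 1 := by omega
      rw [e1, e2]
    have h2 : 2 ∣ a * (a+1) := (Nat.even_mul_succ_self a).two_dvd
    omega
  rw [hoff, hda]
  omega

lemma bmap_mem {d : ℕ} (hd : 2 ≤ d) {p : ℕ × ℕ} (hp : p ∈ pairs d) :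
    bmap d p.1 p.2 ∈ Finset.Icc (d' d + 1) (2 * d' d) := by
  rw [mem_pairs] at hp
  rw [Finset.mem_Icc]
  constructor
  · rw [bmap_eq d p.1 p.2 (by omega)]; omega
  · rcases eq_or_ne p (d-1, d) with h | h
    · rw [h]; exact (bmap_top d hd).le
    · have hq : (d-1, d) ∈ pairs d := by rw [mem_pairs]; constructor <;> omega
      have hlex : p.1 < d - 1 ∨ (p.1 = d - 1 ∧ p.2 < d) := by
        rcases Nat.lt_trichotomy p.1 (d-1) with h1 | h1 | h1
        · left; exact h1
        · right; refine ⟨h1, ?_⟩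
          rcases Nat.lt_or_ge p.2 d with h2 | h2
          · exact h2
          · exfalso; exact h (Prod.ext h1 (by omega))
        · omega
      have := bmap_lt_of_lex (mem_pairs.mpr hp) hq hlex
      rw [bmap_top d hd] at this
      omega


lemma card_pairs (d : ℕ) : (pairs d).card = d' d := by
  have h1 : pairs d = ((Finset.Icc 1 d).sigma (fun i => Finset.Ioc i d)).image
      (fun x => (x.1, x.2)) := by
    ext p
    simp only [pairs, Finset.mem_filter, Finset.mem_product, Finset.mem_Icc,
      Finset.mem_image, Finset.mem_sigma, Finset.mem_Ioc]
    constructor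
    · rintro ⟨⟨h1, h2⟩, h3⟩
      exact ⟨⟨p.1, p.2⟩, by dsimp only; omega, rfl⟩
    · rintro ⟨x, ⟨⟨hx1, hx2⟩, hx3⟩, rfl⟩
      omega
  rw [h1, Finset.card_image_of_injective _ (fun x y h => by
    cases x; cases y; simp only [Prod.mk.injEq] at h; simp [h.1, h.2]),
    Finset.card_sigma]
  have h2 : ∀ i ∈ Finset.Icc 1 d, (Finset.Ioc i d).card = d - i := by
    intro i _; rw [Nat.card_Ioc]
  rw [Finset.sum_congr rfl h2]
  have h3 : ∑ i ∈ Finset.Icc 1 d, (d - i) = ∑ k ∈ Finset.range d, k := by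
    refine Finset.sum_nbij' (fun i => d - i) (fun k => d - k) ?_ ?_ ?_ ?_ ?_
    · intro a ha; simp only [Finset.mem_Icc] at ha; simp only [Finset.mem_range]; omega
    · intro a ha; simp only [Finset.mem_range] at ha; simp only [Finset.mem_Icc]; omega
    · intro a ha; simp only [Finset.mem_Icc] at ha; omega
    · intro a ha; simp only [Finset.mem_range] at ha; omega
    · intro a ha; rfl
  rw [h3, d']
  have := Finset.sum_range_id_mul_two d
  omega


lemma image_bmap (d : ℕ) (hd : 2 ≤ d) :
    (pairs d).image (fun p => bmap d p.1 p.2) = Finset.Icc (d' d + 1) (2 * d' d) := by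
  apply Finset.eq_of_subset_of_card_le
  · intro a ha
    rw [Finset.mem_image] at ha
    obtain ⟨p, hp, rfl⟩ := ha
    exact bmap_mem hd hp
  · rw [Finset.card_image_of_injOn (fun p hp q hq => bmap_injOn hp hq), card_pairs,
      Nat.card_Icc]
    omega

lemma Tval_bmap (d : ℕ) (hd : 2 ≤ d) (lam nu : ℕ → ℕ) {p : ℕ × ℕ} (hp : p ∈ pairs d) :
    Tval d lam nu (bmap d p.1 p.2) = lam p.1 + lam p.2 := by
  have hm := bmap_mem hd hp
  rw [Finset.mem_Icc] at hm
  rw [Tval, if_neg (by omega)]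
  have hfil : (pairs d).filter (fun q => bmap d q.1 q.2 = bmap d p.1 p.2) = {p} := by
    ext q
    simp only [Finset.mem_filter, Finset.mem_singleton]
    constructor
    · rintro ⟨hq, h⟩; exact bmap_injOn hq hp h
    · rintro rfl; exact ⟨hp, rfl⟩
  rw [hfil, Finset.sum_singleton]

lemma multiset_large (d : ℕ) (hd : 2 ≤ d) (lam nu : ℕ → ℕ) :
    (Finset.Icc (d' d + 1) (2 * d' d)).val.map (Tval d lam nu) = Mpair d lam := by
  rw [← image_bmap d hd, Finset.image_val_of_injOn (fun p hp q hq => bmap_injOn hp hq),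
    Multiset.map_map]
  rw [Mpair]
  apply Multiset.map_congr rfl
  intro p hp
  exact Tval_bmap d hd lam nu hp

/-- transfer of counts along a bijection-on -/
lemma card_filter_comp (N : ℕ) (σ : ℕ → ℕ)
    (h : Set.BijOn σ (Set.Icc 1 N) (Set.Icc 1 N)) (P : ℕ → Prop) [DecidablePred P] :
    ((Finset.Icc 1 N).filter (fun l => P (σ l))).card =
      ((Finset.Icc 1 N).filter P).card := by
  apply Finset.card_bij (fun l _ => σ l)
  · intro l hl
    simp only [Finset.mem_filter, Finset.mem_Icc] at hl ⊢
    have := h.mapsTo (Set.mem_Icc.mpr ⟨hl.1.1, hl.1.2⟩)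
    rw [Set.mem_Icc] at this
    exact ⟨⟨this.1, this.2⟩, hl.2⟩
  · intro a ha b hb hab
    simp only [Finset.mem_filter, Finset.mem_Icc] at ha hb
    exact h.injOn (Set.mem_Icc.mpr ⟨ha.1.1, ha.1.2⟩) (Set.mem_Icc.mpr ⟨hb.1.1, hb.1.2⟩) hab
  · intro a ha
    simp only [Finset.mem_filter, Finset.mem_Icc] at ha
    obtain ⟨l, hl, rfl⟩ := h.surjOn (Set.mem_Icc.mpr ⟨ha.1.1, ha.1.2⟩)
    rw [Set.mem_Icc] at hl
    exact ⟨l, by simp only [Finset.mem_filter, Finset.mem_Icc]; exact ⟨⟨hl.1, hl.2⟩, ha.2⟩, rfl⟩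

/-- a downward closed subset of Icc 1 N is an initial interval -/
lemma initial_seg {N : ℕ} (s : Finset ℕ) (hsub : s ⊆ Finset.Icc 1 N)
    (hdc : ∀ l ∈ s, ∀ l', 1 ≤ l' → l' ≤ l → l' ∈ s) :
    s = Finset.Icc 1 s.card := by
  rcases s.eq_empty_or_nonempty with rfl | hne
  · simp
  · have hmax := s.max'_mem hne
    have hs : s = Finset.Icc 1 (s.max' hne) := by
      ext l
      rw [Finset.mem_Icc]
      constructor
      · intro hl
        exact ⟨(Finset.mem_Icc.mp (hsub hl)).1, s.le_max' l hl⟩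
      · rintro ⟨h1, h2⟩
        exact hdc _ hmax l h1 h2
    have h1 : 1 ≤ s.max' hne := (Finset.mem_Icc.mp (hsub hmax)).1
    have hcard : s.card = s.max' hne := by
      conv_lhs => rw [hs]
      rw [Nat.card_Icc]; omega
    rw [hcard]; exact hs

/-- cardinality of value-filter as countP of mapped multiset -/
lemma card_filter_val (s : Finset ℕ) (T : ℕ → ℕ) (t : ℕ) :
    (s.filter (fun a => t ≤ T a)).card = (s.val.map T).countP (fun x => t ≤ x) := by
  rw [Multiset.countP_map, Finset.card_filter]
  simp [Finset.sum_ite_eq, Multiset.countP_eq_card_filter]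
  rfl


/-- `ν ≤ μ_λ` componentwise if and only if the sorting permutation
`σ_{λ,ν}` belongs to `𝒮_{2d'}`. -/
theorem dominance_iff_memS (d : ℕ) (hd : 2 ≤ d) (lam nu : ℕ → ℕ)
    (hlam : IsPart d lam) (hnu : IsPart (d' d) nu)
    (mu : ℕ → ℕ) (hmu : IsPart (d' d) mu)
    (hmuval : (Finset.Icc 1 (d' d)).val.map mu = Mpair d lam)
    (σ : ℕ → ℕ) (hσ : IsSorting d lam nu σ) :
    (∀ k, 1 ≤ k → k ≤ d' d → nu k ≤ mu k) ↔ memS d σ := by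
  have hbij : Set.BijOn σ (Set.Icc 1 (2 * d' d)) (Set.Icc 1 (2 * d' d)) := hσ.1
  have hrange : ∀ l, 1 ≤ l → l ≤ 2 * d' d → 1 ≤ σ l ∧ σ l ≤ 2 * d' d := by
    intro l h1 h2
    have := hbij.mapsTo (Set.mem_Icc.mpr ⟨h1, h2⟩)
    rw [Set.mem_Icc] at this; exact this
  have hmono : ∀ i j, 1 ≤ i → i ≤ j → j ≤ 2 * d' d →
      Tval d lam nu (σ j) ≤ Tval d lam nu (σ i) := by
    intro i j h1 h2 h3
    rcases eq_or_lt_of_le h2 with rfl | hlt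
    · exact le_refl _
    · rcases hσ.2 i j h1 hlt h3 with h | ⟨h, _⟩
      · exact h.le
      · exact h.ge
  have hd'pos : 1 ≤ d' d := by
    rw [d']
    have : 2 * 1 ≤ d * (d - 1) := by
      calc 2 * 1 = 2 := by ring
        _ ≤ d := hd
        _ = d * 1 := (mul_one d).symm
        _ ≤ d * (d - 1) := Nat.mul_le_mul_left d (by omega)
    omega
  have hTsmall : ∀ a, a ≤ d' d → Tval d lam nu a = nu a := by
    intro a ha; rw [Tval, if_pos ha]
  have hL4 : ∀ t, ((Finset.Icc 1 (2 * d' d)).filter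
        (fun a => t ≤ Tval d lam nu a ∧ a ≤ d' d)).card =
      ((Finset.Icc 1 (d' d)).filter (fun a => t ≤ nu a)).card := by
    intro t
    congr 1
    ext a
    simp only [Finset.mem_filter, Finset.mem_Icc]
    constructor
    · rintro ⟨⟨h1, _⟩, h3, h4⟩
      rw [hTsmall a h4] at h3
      exact ⟨⟨h1, h4⟩, h3⟩
    · rintro ⟨⟨h1, h2⟩, h3⟩
      rw [← hTsmall a h2] at h3
      exact ⟨⟨h1, by omega⟩, h3, h2⟩
  have hL3 : ∀ t, ((Finset.Icc 1 (2 * d' d)).filter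
        (fun a => t ≤ Tval d lam nu a ∧ d' d < a)).card =
      ((Finset.Icc 1 (d' d)).filter (fun k => t ≤ mu k)).card := by
    intro t
    have heq : (Finset.Icc 1 (2 * d' d)).filter (fun a => t ≤ Tval d lam nu a ∧ d' d < a) =
        (Finset.Icc (d' d + 1) (2 * d' d)).filter (fun a => t ≤ Tval d lam nu a) := by
      ext a
      simp only [Finset.mem_filter, Finset.mem_Icc]
      omega
    rw [heq, card_filter_val, multiset_large d hd lam nu, ← hmuval, ← card_filter_val]
  have hA'B' : ∀ t, (∀ k, 1 ≤ k → k ≤ d' d → nu k ≤ mu k) →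
      ((Finset.Icc 1 (d' d)).filter (fun a => t ≤ nu a)).card ≤
        ((Finset.Icc 1 (d' d)).filter (fun k => t ≤ mu k)).card := by
    intro t hcomp
    apply Finset.card_le_card
    intro a ha
    simp only [Finset.mem_filter, Finset.mem_Icc] at ha ⊢
    exact ⟨ha.1, le_trans ha.2 (hcomp a ha.1.1 ha.1.2)⟩
  constructor
  · -- componentwise → memS
    intro hcomp
    refine ⟨hσ.1, ?_, ?_⟩
    · -- prefix condition
      intro i hi
      rw [Finset.mem_Icc] at hi
      by_cases hcase : σ i ≤ d' d
      · -- position i holds a small index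
        have step1 : ((Finset.Icc 1 i).filter (fun l => σ l ≤ d' d)).card ≤
            ((Finset.Icc 1 (d' d)).filter (fun a => Tval d lam nu (σ i) ≤ nu a)).card := by
          apply Finset.card_le_card_of_injOn σ
          · intro l hl
            simp only [Finset.mem_coe, Finset.mem_filter, Finset.mem_Icc] at hl ⊢
            have h1 : 1 ≤ σ l := (hrange l hl.1.1 (by omega)).1
            have h2 : Tval d lam nu (σ i) ≤ Tval d lam nu (σ l) :=
              hmono l i hl.1.1 hl.1.2 hi.2
            rw [hTsmall _ hl.2] at h2
            exact ⟨⟨h1, hl.2⟩, h2⟩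
          · intro a ha b hb hab
            simp only [Finset.coe_filter, Set.mem_setOf_eq, Finset.mem_Icc] at ha hb
            exact hbij.injOn (Set.mem_Icc.mpr ⟨ha.1.1, by omega⟩)
              (Set.mem_Icc.mpr ⟨hb.1.1, by omega⟩) hab
        have step3 : ((Finset.Icc 1 (d' d)).filter
              (fun k => Tval d lam nu (σ i) ≤ mu k)).card ≤
            ((Finset.Icc 1 i).filter (fun l => d' d < σ l)).card := by
          rw [← hL3 (Tval d lam nu (σ i)), ← card_filter_comp (2 * d' d) σ hbij
            (fun a => Tval d lam nu (σ i) ≤ Tval d lam nu a ∧ d' d < a)]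
          apply Finset.card_le_card
          intro l hl
          simp only [Finset.mem_filter, Finset.mem_Icc] at hl ⊢
          refine ⟨⟨hl.1.1, ?_⟩, hl.2.2⟩
          by_contra hgt
          push_neg at hgt
          rcases hσ.2 i l hi.1 hgt hl.1.2 with h | ⟨h, h2⟩
          · omega
          · omega
        calc ((Finset.Icc 1 i).filter (fun l => σ l ≤ d' d)).card
            ≤ ((Finset.Icc 1 (d' d)).filter
                (fun a => Tval d lam nu (σ i) ≤ nu a)).card := step1
          _ ≤ ((Finset.Icc 1 (d' d)).filter
                (fun k => Tval d lam nu (σ i) ≤ mu k)).card := hA'B' _ hcomp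
          _ ≤ ((Finset.Icc 1 i).filter (fun l => d' d < σ l)).card := step3
      · -- position i holds a large index
        push_neg at hcase
        have step1 : ((Finset.Icc 1 i).filter (fun l => σ l ≤ d' d)).card ≤
            ((Finset.Icc 1 (d' d)).filter
              (fun a => Tval d lam nu (σ i) + 1 ≤ nu a)).card := by
          apply Finset.card_le_card_of_injOn σ
          · intro l hl
            simp only [Finset.mem_coe, Finset.mem_filter, Finset.mem_Icc] at hl ⊢
            have h1 : 1 ≤ σ l := (hrange l hl.1.1 (by omega)).1
            have hlne : l < i := by
              rcases eq_or_lt_of_le hl.1.2 with rfl | h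
              · omega
              · exact h
            have h2 : Tval d lam nu (σ i) < Tval d lam nu (σ l) := by
              rcases hσ.2 l i hl.1.1 hlne hi.2 with h | ⟨h, h2⟩
              · exact h
              · omega
            rw [hTsmall _ hl.2] at h2
            exact ⟨⟨h1, hl.2⟩, h2⟩
          · intro a ha b hb hab
            simp only [Finset.coe_filter, Set.mem_setOf_eq, Finset.mem_Icc] at ha hb
            exact hbij.injOn (Set.mem_Icc.mpr ⟨ha.1.1, by omega⟩)
              (Set.mem_Icc.mpr ⟨hb.1.1, by omega⟩) hab
        have step3 : ((Finset.Icc 1 (d' d)).filter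
              (fun k => Tval d lam nu (σ i) + 1 ≤ mu k)).card <
            ((Finset.Icc 1 i).filter (fun l => d' d < σ l)).card := by
          rw [← hL3 (Tval d lam nu (σ i) + 1), ← card_filter_comp (2 * d' d) σ hbij
            (fun a => Tval d lam nu (σ i) + 1 ≤ Tval d lam nu a ∧ d' d < a)]
          apply Finset.card_lt_card
          constructor
          · intro l hl
            simp only [Finset.mem_filter, Finset.mem_Icc] at hl ⊢
            refine ⟨⟨hl.1.1, ?_⟩, hl.2.2⟩
            by_contra hgt
            push_neg at hgt
            rcases hσ.2 i l hi.1 hgt hl.1.2 with h | ⟨h, h2⟩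
            · omega
            · omega
          · intro hsub
            have hmem : i ∈ (Finset.Icc 1 (2 * d' d)).filter
                (fun l => Tval d lam nu (σ i) + 1 ≤ Tval d lam nu (σ l) ∧ d' d < σ l) :=
              hsub (by simp only [Finset.mem_filter, Finset.mem_Icc]
                       exact ⟨⟨hi.1, le_refl i⟩, hcase⟩)
            simp only [Finset.mem_filter, Finset.mem_Icc] at hmem
            omega
        calc ((Finset.Icc 1 i).filter (fun l => σ l ≤ d' d)).card
            ≤ ((Finset.Icc 1 (d' d)).filter
                (fun a => Tval d lam nu (σ i) + 1 ≤ nu a)).card := step1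
          _ ≤ ((Finset.Icc 1 (d' d)).filter
                (fun k => Tval d lam nu (σ i) + 1 ≤ mu k)).card := hA'B' _ hcomp
          _ ≤ ((Finset.Icc 1 i).filter (fun l => d' d < σ l)).card := step3.le
    · -- descent condition (automatic for sorting permutations)
      intro i j h1i hij hjN hsi hsj hlt k hik hkj
      have h1j : 1 ≤ σ j := (hrange j (by omega) hjN).1
      have hνle : Tval d lam nu (σ i) ≤ Tval d lam nu (σ j) := by
        rw [hTsmall _ hsi, hTsmall _ hsj]
        exact hnu.1 (σ j) (σ i) h1j hlt.le
      have heq : Tval d lam nu (σ i) = Tval d lam nu (σ j) := by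
        rcases hσ.2 i j h1i hij hjN with h | ⟨h, _⟩
        · omega
        · exact h
      have hk1 : Tval d lam nu (σ k) = Tval d lam nu (σ (k + 1)) := by
        have e1 : Tval d lam nu (σ k) ≤ Tval d lam nu (σ i) := hmono i k h1i hik (by omega)
        have e2 : Tval d lam nu (σ (k+1)) ≤ Tval d lam nu (σ k) :=
          hmono k (k+1) (by omega) (by omega) (by omega)
        have e3 : Tval d lam nu (σ j) ≤ Tval d lam nu (σ (k+1)) :=
          hmono (k+1) j (by omega) (by omega) hjN
        omega
      rcases hσ.2 k (k+1) (by omega) (by omega) (by omega) with h | ⟨_, h2⟩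
      · omega
      · exact h2
  · -- memS → componentwise
    intro hS k h1k hkd'
    rcases Nat.eq_zero_or_pos (nu k) with hz | hpos
    · omega
    · set s := (Finset.Icc 1 (2 * d' d)).filter
        (fun l => nu k ≤ Tval d lam nu (σ l)) with hs
      have hsub : s ⊆ Finset.Icc 1 (2 * d' d) := Finset.filter_subset _ _
      have hdc : ∀ l ∈ s, ∀ l', 1 ≤ l' → l' ≤ l → l' ∈ s := by
        intro l hl l' h1 h2
        rw [hs, Finset.mem_filter, Finset.mem_Icc] at hl ⊢
        exact ⟨⟨h1, by omega⟩, le_trans hl.2 (hmono l' l h1 h2 hl.1.2)⟩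
      have hseg := initial_seg s hsub hdc
      have hmN : s.card ≤ 2 * d' d := by
        calc s.card ≤ (Finset.Icc 1 (2 * d' d)).card := Finset.card_le_card hsub
          _ = 2 * d' d := by rw [Nat.card_Icc]; omega
      have hcntS : ((Finset.Icc 1 s.card).filter (fun l => σ l ≤ d' d)).card =
          ((Finset.Icc 1 (d' d)).filter (fun a => nu k ≤ nu a)).card := by
        conv_lhs => rw [← hseg]
        rw [hs, Finset.filter_filter,
          card_filter_comp (2 * d' d) σ hbij
            (fun a => nu k ≤ Tval d lam nu a ∧ a ≤ d' d), hL4]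
      have hcntL : ((Finset.Icc 1 s.card).filter (fun l => d' d < σ l)).card =
          ((Finset.Icc 1 (d' d)).filter (fun k' => nu k ≤ mu k')).card := by
        conv_lhs => rw [← hseg]
        rw [hs, Finset.filter_filter,
          card_filter_comp (2 * d' d) σ hbij
            (fun a => nu k ≤ Tval d lam nu a ∧ d' d < a), hL3]
      have hkA : k ≤ ((Finset.Icc 1 (d' d)).filter (fun a => nu k ≤ nu a)).card := by
        have hsubk : Finset.Icc 1 k ⊆ (Finset.Icc 1 (d' d)).filter (fun a => nu k ≤ nu a) := by
          intro a ha
          rw [Finset.mem_Icc] at ha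
          rw [Finset.mem_filter, Finset.mem_Icc]
          exact ⟨⟨ha.1, by omega⟩, hnu.1 a k ha.1 ha.2⟩
        calc k = (Finset.Icc 1 k).card := by rw [Nat.card_Icc]; omega
          _ ≤ _ := Finset.card_le_card hsubk
      have hm1 : 1 ≤ s.card := by
        by_contra h
        push_neg at h
        have h0 : s.card = 0 := by omega
        rw [← hcntS, h0] at hkA
        simp at hkA
        omega
      have hle := hS.2.1 s.card (Finset.mem_Icc.mpr ⟨hm1, hmN⟩)
      rw [hcntS, hcntL] at hle
      have hkB : k ≤ ((Finset.Icc 1 (d' d)).filter (fun k' => nu k ≤ mu k')).card :=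
        le_trans hkA hle
      by_contra hcon
      push_neg at hcon
      have hsubB : (Finset.Icc 1 (d' d)).filter (fun k' => nu k ≤ mu k') ⊆
          Finset.Icc 1 (k-1) := by
        intro a ha
        rw [Finset.mem_filter, Finset.mem_Icc] at ha
        rw [Finset.mem_Icc]
        refine ⟨ha.1.1, ?_⟩
        by_contra hgt
        push_neg at hgt
        have : mu a ≤ mu k := hmu.1 k a h1k (by omega)
        omega
      have := Finset.card_le_card hsubB
      rw [Nat.card_Icc] at this
      omega

end FreeNilpotent
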